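/- Let N ≥ 5 and let S satisfy 8 < S < 16, with s = S − 8. The number of XOR-triples {a, b, c} contained in {1, …, 2^{N−1} − 1} \ {S} none of whose elements is congruent to 0 or to s modulo 8 equals 4^{N−3} (that is, 4 · 4^{N−4}). -/

import Mathlib

/-!
Since `S ≡ s (mod 8)`, discarding the residues `0` and `s` already discards `S`, so the admissible
numbers are the `x < 2 ^ (N - 1)` whose low three bits avoid the subgroup `{0, s}` of `(ℤ/2)³`.
Writing `x = 8 q + r`, xor acts on `q` and `r` independently. Each XOR-triple accounts for six
ordered pairs `(a, b)` of admissible numbers with `a ^^^ b` admissible, and there are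
`24 · 4 ^ (N - 4)` such pairs: `24` choices of the low bits, free choices of the high parts.
-/

/-- An XOR-triple is a 3-element set of positive natural numbers `{a, b, c}`
with `a ^^^ b = c`; this condition is symmetric in `a`, `b`, `c`. -/
def IsXorTriple (t : Finset ℕ) : Prop :=
  t.card = 3 ∧ (∀ x ∈ t, 0 < x) ∧ ∃ a ∈ t, ∃ b ∈ t, a ≠ b ∧ a ^^^ b ∈ t

instance : DecidablePred IsXorTriple := fun t => by
  unfold IsXorTriple; infer_instance

open Finset

lemma card_insert_xor_eq_three {a b : ℕ} (ha : 0 < a) (hb : 0 < b) (hab : a ≠ b) :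
    #{a, b, a ^^^ b} = 3 :=
  card_eq_three.mpr
    ⟨a, b, a ^^^ b, hab, Ne.symm (by simpa using hb.ne'), Ne.symm (by simpa using ha.ne'), rfl⟩

lemma isXorTriple_insert {a b : ℕ} (ha : 0 < a) (hb : 0 < b) (hab : a ≠ b) :
    IsXorTriple {a, b, a ^^^ b} := by
  refine ⟨card_insert_xor_eq_three ha hb hab, ?_, a, by simp, b, by simp, hab, by simp⟩
  simp only [mem_insert, mem_singleton, forall_eq_or_imp, forall_eq]
  exact ⟨ha, hb, Nat.pos_of_ne_zero (by simpa using hab)⟩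

namespace IsXorTriple

variable {t : Finset ℕ} {x y : ℕ}

lemma xor_mem (ht : IsXorTriple t) (hx : x ∈ t) (hy : y ∈ t) (hxy : x ≠ y) :
    x ^^^ y ∈ t := by
  obtain ⟨hcard, hpos, a, ha, b, hb, hab, hc⟩ := ht
  have : t = {a, b, a ^^^ b} := (eq_of_subset_of_card_le (by simp [insert_subset_iff, *])
    (by rw [hcard, card_insert_xor_eq_three (hpos a ha) (hpos b hb) hab])).symm
  subst this
  simp only [mem_insert, mem_singleton] at hx hy ⊢
  rcases hx with rfl | rfl | rfl <;> rcases hy with rfl | rfl | rfl <;>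
    simp_all [Nat.xor_comm]

lemma eq_insert (ht : IsXorTriple t) (hx : x ∈ t) (hy : y ∈ t) (hxy : x ≠ y) :
    t = {x, y, x ^^^ y} :=
  (eq_of_subset_of_card_le (by simp [insert_subset_iff, hx, hy, ht.xor_mem hx hy hxy])
    (by rw [ht.1, card_insert_xor_eq_three (ht.2.1 x hx) (ht.2.1 y hy) hxy])).symm

end IsXorTriple

def xorPairs (A : Finset ℕ) : Finset (ℕ × ℕ) := {p ∈ A ×ˢ A | p.1 ^^^ p.2 ∈ A}

lemma mem_xorPairs {A : Finset ℕ} {p : ℕ × ℕ} :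
    p ∈ xorPairs A ↔ p.1 ∈ A ∧ p.2 ∈ A ∧ p.1 ^^^ p.2 ∈ A := by
  simp [xorPairs, and_assoc]

theorem card_filter_isXorTriple_mul_six {A : Finset ℕ} (hA : 0 ∉ A) :
    #{t ∈ A.powerset | IsXorTriple t} * 6 = #(xorPairs A) := by
  have pos : ∀ x ∈ A, 0 < x := fun x hx => Nat.pos_of_ne_zero (ne_of_mem_of_not_mem hx hA)
  have ne : ∀ p ∈ xorPairs A, p.1 ≠ p.2 := fun p hp h =>
    hA (by simpa [h] using (mem_xorPairs.1 hp).2.2)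
  have maps : ∀ p ∈ xorPairs A,
      ({p.1, p.2, p.1 ^^^ p.2} : Finset ℕ) ∈ {t ∈ A.powerset | IsXorTriple t} := by
    intro p hp
    obtain ⟨h1, h2, h3⟩ := mem_xorPairs.1 hp
    simpa [insert_subset_iff, h1, h2, h3] using
      isXorTriple_insert (pos _ h1) (pos _ h2) (ne p hp)
  rw [card_eq_sum_card_fiberwise maps, sum_const_nat]
  intro t ht
  obtain ⟨htA, ht⟩ := mem_filter.1 ht
  rw [mem_powerset] at htA
  have fiber : {p ∈ xorPairs A | {p.1, p.2, p.1 ^^^ p.2} = t} = t.offDiag := by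
    ext ⟨x, y⟩
    simp only [mem_filter, mem_offDiag]
    constructor
    · rintro ⟨hp, rfl⟩
      exact ⟨by simp, by simp, ne _ hp⟩
    · rintro ⟨hx, hy, hxy⟩
      exact ⟨mem_xorPairs.2 ⟨htA hx, htA hy, htA (ht.xor_mem hx hy hxy)⟩,
        (ht.eq_insert hx hy hxy).symm⟩
  rw [fiber, offDiag_card, ht.1]

section LowBits

variable {m k : ℕ} {R : Finset ℕ}

def lowBitsIn (m k : ℕ) (R : Finset ℕ) : Finset ℕ :=
  {x ∈ range (2 ^ m * 2 ^ k) | x % 2 ^ m ∈ R}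

lemma mem_lowBitsIn {x : ℕ} :
    x ∈ lowBitsIn m k R ↔ x % 2 ^ m ∈ R ∧ x / 2 ^ m < 2 ^ k := by
  rw [lowBitsIn, mem_filter, mem_range, and_comm, Nat.div_lt_iff_lt_mul (by positivity), mul_comm]

theorem card_xorPairs_lowBitsIn (hR : R ⊆ range (2 ^ m)) :
    #(xorPairs (lowBitsIn m k R)) = #(xorPairs R) * 4 ^ k := by
  have split : ∀ q r, r < 2 ^ m → (2 ^ m * q + r) % 2 ^ m = r ∧ (2 ^ m * q + r) / 2 ^ m = q :=
    fun q r hr => ⟨by rw [Nat.mul_add_mod, Nat.mod_eq_of_lt hr],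
      by rw [Nat.mul_add_div (by positivity), Nat.div_eq_of_lt hr, add_zero]⟩
  calc #(xorPairs (lowBitsIn m k R))
      = #(xorPairs R ×ˢ (range (2 ^ k) ×ˢ range (2 ^ k))) := by
        refine card_nbij' (fun p => ((p.1 % 2 ^ m, p.2 % 2 ^ m), (p.1 / 2 ^ m, p.2 / 2 ^ m)))
          (fun q => (2 ^ m * q.2.1 + q.1.1, 2 ^ m * q.2.2 + q.1.2)) ?_ ?_ ?_ ?_
        · intro p hp
          simp only [mem_coe, mem_product, mem_xorPairs, mem_lowBitsIn, mem_range,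
            Nat.xor_mod_two_pow, Nat.xor_div_two_pow] at hp ⊢
          exact ⟨⟨hp.1.1, hp.2.1.1, hp.2.2.1⟩, hp.1.2, hp.2.1.2⟩
        · rintro ⟨⟨r₁, r₂⟩, q₁, q₂⟩ hq
          simp only [mem_coe, mem_product, mem_xorPairs, mem_range] at hq
          obtain ⟨⟨hr₁, hr₂, hr⟩, hq₁, hq₂⟩ := hq
          obtain ⟨e₁, f₁⟩ := split q₁ r₁ (mem_range.1 (hR hr₁))
          obtain ⟨e₂, f₂⟩ := split q₂ r₂ (mem_range.1 (hR hr₂))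
          simp only [mem_coe, mem_xorPairs, mem_lowBitsIn, Nat.xor_mod_two_pow,
            Nat.xor_div_two_pow, e₁, f₁, e₂, f₂]
          exact ⟨⟨hr₁, hq₁⟩, ⟨hr₂, hq₂⟩, hr, Nat.xor_lt_two_pow hq₁ hq₂⟩
        · intro p _
          simp only [Nat.div_add_mod]
        · rintro ⟨⟨r₁, r₂⟩, q₁, q₂⟩ hq
          simp only [mem_coe, mem_product, mem_xorPairs] at hq
          obtain ⟨e₁, f₁⟩ := split q₁ r₁ (mem_range.1 (hR hq.1.1))
          obtain ⟨e₂, f₂⟩ := split q₂ r₂ (mem_range.1 (hR hq.1.2.1))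
          simp only [e₁, f₁, e₂, f₂]
    _ = #(xorPairs R) * 4 ^ k := by
        rw [card_product, card_product, card_range, ← mul_pow]; norm_num

end LowBits

/-- `{0, s}` is a subgroup of `(ℤ/2)³`: `r₁` avoids it (`6` choices) and `r₂` avoids both it
and its coset `r₁ ^^^ {0, s}` (`4` choices). -/
lemma card_xorPairs_residues {s : ℕ} (hs₀ : 0 < s) (hs : s < 8) :
    #(xorPairs {r ∈ range 8 | ¬(r = 0 ∨ r = s)}) = 24 := by
  interval_cases s <;> decide

theorem sand_mandala_hidden_triples (N S : ℕ) (hN : 5 ≤ N) (h8 : 8 < S) (h16 : S < 16) :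
    let s := S - 8
    (((Finset.Icc 1 (2 ^ (N - 1) - 1)).erase S).powerset.filter
        (fun t => IsXorTriple t ∧ ∀ x ∈ t, ¬(x % 8 = 0 ∨ x % 8 = s))).card
      = 4 ^ (N - 3) := by
  intro s
  set R : Finset ℕ := {r ∈ range 8 | ¬(r = 0 ∨ r = s)}
  set A := lowBitsIn 3 (N - 4) R
  have hpow : 2 ^ (N - 1) = 2 ^ 3 * 2 ^ (N - 4) := by rw [← pow_add]; congr 1; omega
  have hA : {x ∈ (Icc 1 (2 ^ (N - 1) - 1)).erase S | ¬(x % 8 = 0 ∨ x % 8 = s)} = A := by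
    ext x
    simp only [A, R, lowBitsIn, mem_filter, mem_erase, mem_Icc, mem_range, hpow]
    omega
  have htriples : ((Icc 1 (2 ^ (N - 1) - 1)).erase S).powerset.filter
      (fun t => IsXorTriple t ∧ ∀ x ∈ t, ¬(x % 8 = 0 ∨ x % 8 = s)) =
      {t ∈ A.powerset | IsXorTriple t} := by
    rw [← hA]
    ext t
    simp only [mem_filter, mem_powerset, subset_iff, imp_and, forall_and]
    tauto
  have hcount := card_filter_isXorTriple_mul_six (A := A) (by simp [A, R, mem_lowBitsIn])
  rw [card_xorPairs_lowBitsIn (R := R) (filter_subset _ _),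
    card_xorPairs_residues (by omega) (by omega)] at hcount
  rw [htriples, show N - 3 = N - 4 + 1 by omega, pow_succ]
  omega
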